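/- arXiv:0911.4003 — 4 statements merged into one kernel-verified Lean document; each statement's English description precedes it below -/
import Mathlib

section
/- In a finite network, there exist a flow f and an s–t cut F such that f saturates every edge of F and f is zero on every edge of the reverse cut (i.e., f and F are orthogonal). -/
open scoped ENNReal NNReal Classical

/-- A network: a loopless digraph with edge set `E` on vertex type `V`,
capacity function `c`, source `s` (no in-edges) and sink `t` (no out-edges). -/
structure Network (V : Type) where
  E : Set (V × V)
  loopless : ∀ v, (v, v) ∉ E
  c : V × V → ℝ≥0
  s : V
  t : V
  ne : s ≠ t
  no_in_s : ∀ v, (v, s) ∉ E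
  no_out_t : ∀ v, (t, v) ∉ E

variable {V : Type}

/-- Out-degree of `f` at `x`: sum of `f` over edges leaving `x`. -/
noncomputable def dplus (f : V × V → ℝ≥0) (x : V) : ℝ≥0∞ := ∑' v, (f (x, v) : ℝ≥0∞)

/-- In-degree of `f` at `x`: sum of `f` over edges entering `x`. -/
noncomputable def dminus (f : V × V → ℝ≥0) (x : V) : ℝ≥0∞ := ∑' v, (f (v, x) : ℝ≥0∞)

/-- A flow: nonnegative, supported on the edges, below capacity, Kirchhoff away from s,t. -/
structure IsFlow (N : Network V) (f : V × V → ℝ≥0) : Prop where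
  supp : ∀ e, e ∉ N.E → f e = 0
  cap : ∀ e, f e ≤ N.c e
  kirchhoff : ∀ x, x ≠ N.s → x ≠ N.t → dplus f x = dminus f x

noncomputable def flowValue (N : Network V) (f : V × V → ℝ≥0) : ℝ≥0∞ := dplus f N.s

/-- An s–t cut, given by its vertex side `S`. -/
def IsCut (N : Network V) (S : Set V) : Prop := N.s ∈ S ∧ N.t ∉ S

/-- The edges of the cut `E(S, V∖S)`. -/
def cutEdges (N : Network V) (S : Set V) : Set (V × V) := {e ∈ N.E | e.1 ∈ S ∧ e.2 ∉ S}

noncomputable def cutCap (N : Network V) (S : Set V) : ℝ≥0∞ :=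
  ∑' e : cutEdges N S, (N.c e : ℝ≥0∞)

noncomputable def cutFlow (N : Network V) (f : V × V → ℝ≥0) (S : Set V) : ℝ≥0∞ :=
  ∑' e : cutEdges N S, (f e : ℝ≥0∞)

/-- `f` saturates the cut `E(S,V∖S)` and vanishes on the reverse cut `E(V∖S,S)`. -/
def Orthogonal (N : Network V) (f : V × V → ℝ≥0) (S : Set V) : Prop :=
  (∀ e ∈ cutEdges N S, f e = N.c e) ∧ (∀ e ∈ cutEdges N Sᶜ, f e = 0)

/-- A weighted web. -/
structure Web (V : Type) where
  D : Set (V × V)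
  A : Set V
  B : Set V
  w : V → ℝ≥0

def IsWalk (E : Set (V × V)) (p : List V) : Prop := p.Chain' (fun a b => (a, b) ∈ E)

/-- A (finite, directed) path/walk from `A` to `B` in the digraph with edge set `E`. -/
def IsABPath (E : Set (V × V)) (A B : Set V) (p : List V) : Prop :=
  IsWalk E p ∧ (∃ a ∈ A, p.head? = some a) ∧ (∃ b ∈ B, p.getLast? = some b)

/-- `S` is `A`–`B`-separating in the web `W`. -/
def Separates (W : Web V) (S : Set V) : Prop :=
  ∀ p : List V, IsABPath W.D W.A W.B p → ∃ x ∈ S, x ∈ p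

/-- A current in a weighted web. -/
structure IsCurrent (W : Web V) (f : V × V → ℝ≥0) : Prop where
  supp : ∀ e, e ∉ W.D → f e = 0
  out_le : ∀ x, dplus f x ≤ (W.w x : ℝ≥0∞)
  in_le : ∀ x, dminus f x ≤ (W.w x : ℝ≥0∞)
  flow_ineq : ∀ x, x ∉ W.A → dplus f x ≤ dminus f x
  a_in : ∀ a ∈ W.A, dminus f a = 0
  b_out : ∀ b ∈ W.B, dplus f b = 0

def SAT (W : Web V) (f : V × V → ℝ≥0) : Set V :=
  {x | x ∈ W.A ∨ dminus f x = (W.w x : ℝ≥0∞)}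

def SINK (f : V × V → ℝ≥0) : Set V := {x | dplus f x = 0}

def TER (W : Web V) (f : V × V → ℝ≥0) : Set V := SAT W f ∩ SINK f

/-- The set of vertices separated ("roofed") from `B` by `S`. -/
def RF (W : Web V) (S : Set V) : Set V :=
  {v | ∀ p : List V, IsABPath W.D {v} W.B p → ∃ x ∈ S, x ∈ p}

/-- The essential vertices of `S`: those `x ∈ S` not separated from `B` by `S∖{x}`. -/
def Essential (W : Web V) (S : Set V) : Set V :=
  {x ∈ S | ∃ p : List V, IsABPath W.D {x} W.B p ∧ ∀ y ∈ p, y ∈ S → y = x}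

def RFo (W : Web V) (S : Set V) : Set V := RF W S \ Essential W S

/-- A wave: a current whose terminal set separates, sending no flow outside `RF(TER f)`. -/
def IsWave (W : Web V) (f : V × V → ℝ≥0) : Prop :=
  IsCurrent W f ∧ Separates W (TER W f) ∧ ∀ x, x ∉ RF W (TER W f) → dplus f x = 0

def Bipartite (W : Web V) : Prop :=
  (∀ v : V, v ∈ W.A ∪ W.B) ∧ ∀ e ∈ W.D, e.1 ∈ W.A ∧ e.2 ∈ W.B

def IsHindrance (W : Web V) (f : V × V → ℝ≥0) : Prop :=
  IsWave W f ∧ ∃ a ∈ W.A, a ∉ Essential W (TER W f) ∧ dplus f a < (W.w a : ℝ≥0∞)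

def Hindered (W : Web V) : Prop := ∃ f, IsHindrance W f

def Loose (W : Web V) : Prop :=
  (∀ f, IsWave W f → ∀ e, f e = 0) ∧ ¬ IsHindrance W (fun _ => 0)

/-- A web-flow: a current satisfying Kirchhoff's law outside `A ∪ B`. -/
def IsWebFlow (W : Web V) (f : V × V → ℝ≥0) : Prop :=
  IsCurrent W f ∧ ∀ x, x ∉ W.A ∪ W.B → dplus f x = dminus f x

/-- The quotient web `Γ/f`. -/
def quotWeb (W : Web V) (f : V × V → ℝ≥0) : Web V where
  D := {e ∈ W.D | e.1 ∉ RFo W (TER W f) ∧ e.2 ∉ RFo W (TER W f)}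
  A := Essential W (TER W f)
  B := W.B
  w := W.w

/-- `f ↷ g`: `f` plus the restriction of `g` to the edges of `Γ/f`. -/
noncomputable def hetz (W : Web V) (f g : V × V → ℝ≥0) : V × V → ℝ≥0 :=
  fun e => f e + if e ∈ (quotWeb W f).D then g e else 0

/-- The residual network `RES(Δ,f)`. -/
noncomputable def resNetwork (N : Network V) (f : V × V → ℝ≥0) : Network V where
  E := N.E ∪ {e | (e.2, e.1) ∈ N.E ∧ e.2 ≠ N.s ∧ e.1 ≠ N.t}
  loopless := fun v hv => hv.elim (N.loopless v) (fun h => N.loopless v h.1)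
  c := fun e => if e ∈ N.E then N.c e - f e else f (e.2, e.1)
  s := N.s
  t := N.t
  ne := N.ne
  no_in_s := fun v hv => hv.elim (N.no_in_s v) (fun h => h.2.1 rfl)
  no_out_t := fun v hv => hv.elim (N.no_out_t v) (fun h => h.2.2 rfl)

/-- `f ⊕ g`, for `g` a flow in the residual network. -/
noncomputable def oplus (N : Network V) (f g : V × V → ℝ≥0) : V × V → ℝ≥0 :=
  fun e => if e ∈ N.E then f e + g e - g (e.2, e.1) else 0

/-- A finite directed s–t path. -/
def IsSTPath (N : Network V) (p : List V) : Prop :=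
  IsWalk N.E p ∧ p.head? = some N.s ∧ p.getLast? = some N.t ∧ p.Nodup

/-- A mundane flow: a nonnegative combination of (characteristic functions of) s–t paths. -/
def IsMundane (N : Network V) (f : V × V → ℝ≥0) : Prop :=
  ∃ (ι : Type) (θ : ι → ℝ≥0) (P : ι → List V),
    (∀ i, 0 < θ i) ∧ (∀ i, IsSTPath N (P i)) ∧
    ∀ e : V × V, (f e : ℝ≥0∞) = ∑' i, if e ∈ (P i).zip (P i).tail then (θ i : ℝ≥0∞) else 0

def NetLocallyFinite (N : Network V) : Prop :=
  ∀ v : V, {e ∈ N.E | e.1 = v ∨ e.2 = v}.Finite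

/-- A finite-cut-respecting flow. -/
def IsFCR (N : Network V) (f : V × V → ℝ≥0) : Prop :=
  IsFlow N f ∧ ∀ S : Set V, N.s ∈ S → (cutEdges N S).Finite →
    (N.t ∈ S → cutFlow N f S = cutFlow N f Sᶜ) ∧
    (N.t ∉ S → cutFlow N f S = cutFlow N f Sᶜ + flowValue N f)

/-- A cut-respecting flow. -/
def IsCR (N : Network V) (f : V × V → ℝ≥0) : Prop :=
  IsFCR N f ∧ ∀ S : Set V, IsCut N S →
    flowValue N f + cutFlow N f Sᶜ ≤ cutCap N S ∧
    cutFlow N f S ≤ cutCap N Sᶜ + flowValue N f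

/-
Take a flow `f` of maximum value (it exists by compactness) and let `S` be the set of vertices
reachable from `s` along residual arcs: unsaturated edges forwards, edges carrying positive flow
backwards. No residual arc leaves `S`, which is exactly orthogonality. If `t` were in `S`, summing
the signed indicators of the residual arcs of a walk from `s` to `t` would give a direction `g`
whose net outflow telescopes to `1` at `s`, `-1` at `t` and `0` elsewhere; then `f + ε g` is a
flow of larger value for small `ε > 0`.
-/

open Filter Topology

lemma exists_pos_forall_add_mul_mem_Icc {ι : Type*} [Finite ι] {l a u g : ι → ℝ}
    (hl : ∀ i, l i ≤ a i) (hu : ∀ i, a i ≤ u i) (hpos : ∀ i, 0 < g i → a i < u i)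
    (hneg : ∀ i, g i < 0 → l i < a i) :
    ∃ ε : ℝ, 0 < ε ∧ ∀ i, a i + ε * g i ∈ Set.Icc (l i) (u i) := by
  have h_event : ∀ i, ∀ᶠ ε in 𝓝[>] (0 : ℝ), a i + ε * g i ∈ Set.Icc (l i) (u i) := by
    intro i
    have hlim : Tendsto (fun ε : ℝ => a i + ε * g i) (𝓝[>] 0) (𝓝 (a i)) :=
      (Continuous.tendsto' (by fun_prop) 0 (a i) (by simp)).mono_left nhdsWithin_le_nhds
    rcases lt_trichotomy (g i) 0 with hg | hg | hg
    · filter_upwards [self_mem_nhdsWithin, hlim.eventually (lt_mem_nhds (hneg i hg))]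
        with ε (hε : 0 < ε) hlow
      exact ⟨hlow.le, by nlinarith [hu i]⟩
    · exact .of_forall fun ε => by simpa [hg] using ⟨hl i, hu i⟩
    · filter_upwards [self_mem_nhdsWithin, hlim.eventually (gt_mem_nhds (hpos i hg))]
        with ε (hε : 0 < ε) hup
      exact ⟨by nlinarith [hl i], hup.le⟩
  obtain ⟨ε, hmem, hε⟩ := ((eventually_all.2 h_event).and self_mem_nhdsWithin).exists
  exact ⟨ε, hε, hmem⟩

section

variable {N : Network V} {f : V × V → ℝ≥0} {g : V × V → ℝ}

def ResidualAdj (N : Network V) (f : V × V → ℝ≥0) (u v : V) : Prop :=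
  (u, v) ∈ N.E ∧ f (u, v) < N.c (u, v) ∨ (v, u) ∈ N.E ∧ 0 < f (v, u)

/-- Exactly what is needed for `f + ε • g` to stay nonnegative, below capacity and supported on
`N.E` for all small `ε > 0`. -/
def IsResidualDirection (N : Network V) (f : V × V → ℝ≥0) (g : V × V → ℝ) : Prop :=
  ∀ e, (g e ≠ 0 → e ∈ N.E) ∧ (0 < g e → f e < N.c e) ∧ (g e < 0 → 0 < f e)

lemma isResidualDirection_zero : IsResidualDirection N f 0 := fun _ => by simp

lemma IsResidualDirection.add_single (hg : IsResidualDirection N f g) {e : V × V} {a : ℝ}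
    (he : e ∈ N.E) (hpos : 0 < a → f e < N.c e) (hneg : a < 0 → 0 < f e) :
    IsResidualDirection N f (g + Pi.single e a) := by
  intro e'
  by_cases h : e' = e
  · subst h
    simp only [Pi.add_apply, Pi.single_eq_same]
    refine ⟨fun _ => he, fun h => ?_, fun h => ?_⟩
    · by_cases ha : 0 < a
      exacts [hpos ha, (hg e').2.1 (by linarith)]
    · by_cases ha : a < 0
      exacts [hneg ha, (hg e').2.2 (by linarith)]
  · simpa [Pi.single_eq_of_ne h] using hg e'

lemma IsFlow.orthogonal_of_residualAdj_mem (hf : IsFlow N f) {S : Set V}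
    (hS : ∀ u v, u ∈ S → ResidualAdj N f u v → v ∈ S) : Orthogonal N f S := by
  constructor
  · rintro ⟨u, v⟩ ⟨he, hu, hv⟩
    by_contra hne
    exact hv (hS u v hu (.inl ⟨he, lt_of_le_of_ne (hf.cap _) hne⟩))
  · rintro ⟨u, v⟩ ⟨he, hu, hv⟩
    by_contra hne
    exact hu (hS v u (not_not.1 hv) (.inr ⟨he, pos_iff_ne_zero.2 hne⟩))

variable [Fintype V]

def netOut : (V × V → ℝ) →ₗ[ℝ] V → ℝ where
  toFun g x := ∑ v, g (x, v) - ∑ v, g (v, x)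
  map_add' g h := by
    funext x
    simp only [Pi.add_apply, Finset.sum_add_distrib]
    ring
  map_smul' a g := by
    funext x
    simp only [Pi.smul_apply, smul_eq_mul, ← Finset.mul_sum, RingHom.id_apply]
    ring

lemma netOut_apply (g : V × V → ℝ) (x : V) :
    netOut g x = ∑ v, g (x, v) - ∑ v, g (v, x) := rfl

lemma netOut_single (e : V × V) (a : ℝ) :
    netOut (Pi.single e a) = Pi.single e.1 a - Pi.single e.2 a := by
  funext x
  obtain ⟨u, v⟩ := e
  simp [netOut_apply, Pi.single_apply, Prod.ext_iff, ite_and]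

lemma dplus_eq_coe_sum (f : V × V → ℝ≥0) (x : V) :
    dplus f x = ((∑ v, f (x, v) : ℝ≥0) : ℝ≥0∞) := by
  rw [dplus, tsum_fintype, ENNReal.ofNNReal_finsetSum]

lemma dminus_eq_coe_sum (f : V × V → ℝ≥0) (x : V) :
    dminus f x = ((∑ v, f (v, x) : ℝ≥0) : ℝ≥0∞) := by
  rw [dminus, tsum_fintype, ENNReal.ofNNReal_finsetSum]

lemma dplus_eq_dminus_iff_netOut_eq_zero (f : V × V → ℝ≥0) (x : V) :
    dplus f x = dminus f x ↔ netOut (fun e => (f e : ℝ)) x = 0 := by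
  rw [dplus_eq_coe_sum, dminus_eq_coe_sum, ENNReal.coe_inj, ← NNReal.coe_inj, netOut_apply,
    sub_eq_zero]
  push_cast
  rfl

lemma exists_isFlow_forall_flowValue_le (N : Network V) :
    ∃ f, IsFlow N f ∧ ∀ f', IsFlow N f' → flowValue N f' ≤ flowValue N f := by
  have hflows : {f | IsFlow N f} = (⋂ e ∈ N.Eᶜ, {f | f e = 0}) ∩ (⋂ e, {f | f e ≤ N.c e}) ∩
      ⋂ x ∈ ({N.s, N.t} : Set V)ᶜ, {f | dplus f x = dminus f x} := by
    ext f
    simp only [Set.mem_ofPred_eq, Set.mem_inter_iff, Set.mem_iInter, Set.mem_compl_iff,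
      Set.mem_insert_iff, Set.mem_singleton_iff, not_or]
    exact ⟨fun hf => ⟨⟨hf.supp, hf.cap⟩, fun x hx => hf.kirchhoff x hx.1 hx.2⟩,
      fun ⟨⟨hsupp, hcap⟩, hk⟩ => ⟨hsupp, hcap, fun x hs ht => hk x ⟨hs, ht⟩⟩⟩
  have hclosed : IsClosed {f | IsFlow N f} := by
    simp only [hflows, dplus_eq_coe_sum, dminus_eq_coe_sum]
    exact .inter
      (.inter (isClosed_biInter fun e _ => isClosed_eq (continuous_apply e) continuous_const)
        (isClosed_iInter fun e => isClosed_le (continuous_apply e) continuous_const))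
      (isClosed_biInter fun x _ => isClosed_eq (by fun_prop) (by fun_prop))
  have hcompact : IsCompact {f | IsFlow N f} :=
    (isCompact_univ_pi fun e => isCompact_Icc (a := 0) (b := N.c e)).of_isClosed_subset hclosed
      fun f hf e _ => ⟨zero_le, hf.cap e⟩
  have hzero : IsFlow N 0 :=
    ⟨fun _ _ => rfl, fun _ => zero_le, fun _ _ _ => by simp [dplus, dminus]⟩
  have hcont : Continuous fun f => flowValue N f := by
    simp only [flowValue, dplus_eq_coe_sum]
    fun_prop
  obtain ⟨f, hf, hmax⟩ := hcompact.exists_isMaxOn ⟨0, hzero⟩ hcont.continuousOn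
  exact ⟨f, hf, fun f' hf' => hmax hf'⟩

lemma exists_isResidualDirection_netOut_eq {v : V}
    (h : Relation.ReflTransGen (ResidualAdj N f) N.s v) :
    ∃ g, IsResidualDirection N f g ∧ netOut g = Pi.single N.s 1 - Pi.single v 1 := by
  induction h with
  | refl => exact ⟨0, isResidualDirection_zero, by simp⟩
  | @tail u v _ huv ih =>
    obtain ⟨g, hg, hnet⟩ := ih
    rcases huv with ⟨he, hlt⟩ | ⟨he, hpos⟩
    · refine ⟨g + Pi.single (u, v) 1, hg.add_single he (fun _ => hlt) (by norm_num), ?_⟩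
      rw [map_add, hnet, netOut_single]
      abel
    · refine ⟨g + Pi.single (v, u) (-1), hg.add_single he (by norm_num) (fun _ => hpos), ?_⟩
      rw [map_add, hnet, netOut_single, Pi.single_neg, Pi.single_neg]
      abel

lemma IsFlow.exists_flowValue_lt (hf : IsFlow N f) (hg : IsResidualDirection N f g)
    (hnet : netOut g = Pi.single N.s 1 - Pi.single N.t 1) :
    ∃ f', IsFlow N f' ∧ flowValue N f < flowValue N f' := by
  obtain ⟨ε, hε, hmem⟩ := exists_pos_forall_add_mul_mem_Icc (l := 0) (a := fun e => (f e : ℝ))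
    (u := fun e => (N.c e : ℝ)) (fun e => (f e).2) (fun e => hf.cap e) (fun e h => (hg e).2.1 h)
    (fun e h => (hg e).2.2 h)
  let f' : V × V → ℝ≥0 := fun e => ⟨f e + ε * g e, (hmem e).1⟩
  have hf' : (fun e => (f' e : ℝ)) = (fun e => (f e : ℝ)) + ε • g := rfl
  have hsupp : ∀ e, e ∉ N.E → g e = 0 := fun e => not_imp_comm.1 (hg e).1
  have hout : ∑ v, g (N.s, v) = 1 := by
    have hin : ∑ v, g (v, N.s) = 0 := Finset.sum_eq_zero fun v _ => hsupp _ (N.no_in_s v)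
    simpa [netOut_apply, hin, N.ne] using congrFun hnet N.s
  refine ⟨f', ⟨fun e he => ?_, fun e => NNReal.coe_le_coe.1 (hmem e).2, fun x hs ht => ?_⟩, ?_⟩
  · exact NNReal.eq <| by simpa [hf.supp e he, hsupp e he] using congrFun hf' e
  · have hfx := (dplus_eq_dminus_iff_netOut_eq_zero f x).1 (hf.kirchhoff x hs ht)
    rw [dplus_eq_dminus_iff_netOut_eq_zero, hf', map_add, map_smul, hnet]
    simp [hfx, hs, ht]
  · rw [flowValue, flowValue, dplus_eq_coe_sum, dplus_eq_coe_sum, ENNReal.coe_lt_coe,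
      ← NNReal.coe_lt_coe]
    have hsum : ∑ v, (f' (N.s, v) : ℝ) = ∑ v, (f (N.s, v) : ℝ) + ε * ∑ v, g (N.s, v) := by
      rw [Finset.mul_sum, ← Finset.sum_add_distrib]
      rfl
    push_cast
    rw [hout] at hsum
    linarith

lemma IsFlow.not_reflTransGen_residualAdj_of_forall_flowValue_le (hf : IsFlow N f)
    (hmax : ∀ f', IsFlow N f' → flowValue N f' ≤ flowValue N f) :
    ¬ Relation.ReflTransGen (ResidualAdj N f) N.s N.t := fun hreach => by
  obtain ⟨g, hg, hnet⟩ := exists_isResidualDirection_netOut_eq hreach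
  obtain ⟨f', hf', hlt⟩ := hf.exists_flowValue_lt hg hnet
  exact (hmax f' hf').not_gt hlt

end

theorem stmt0 [Fintype V] (N : Network V) :
    ∃ (f : V × V → ℝ≥0) (S : Set V), IsFlow N f ∧ IsCut N S ∧ Orthogonal N f S := by
  obtain ⟨f, hf, hmax⟩ := exists_isFlow_forall_flowValue_le N
  refine ⟨f, {v | Relation.ReflTransGen (ResidualAdj N f) N.s v}, hf,
    ⟨.refl, hf.not_reflTransGen_residualAdj_of_forall_flowValue_le hmax⟩, ?_⟩
  exact hf.orthogonal_of_residualAdj_mem fun u v hu huv => hu.tail huv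
end

section
/- Let (f_i : i ∈ I) be a family of waves in a weighted web, indexed by a totally ordered set I, such that f_i ≤ f_j (edgewise) whenever i ≤ j. Then the pointwise supremum f = sup_i f_i is a wave. -/
open scoped ENNReal NNReal Classical

variable {V : Type}

/-!
Degrees of the supremum are the suprema of the degrees (monotone convergence for sums in `ℝ≥0∞`),
so every current inequality passes to `f`. Saturation is preserved upwards and being a sink
downwards along the chain, hence a vertex terminal for cofinally many `f_i` is terminal for `f`.
A finite path meeting `TER(f_i)` for all large `i` meets it, by pigeonhole, in one fixed vertex
for cofinally many `i`; applied to `A`–`B` paths this gives separation, and applied to paths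
leaving a vertex `x` with `d⁺_{f_i}(x) > 0` it puts `x` in `RF(TER f)`.
-/

open Filter

theorem ENNReal.tsum_iSup_of_monotone {α ι : Type*} [Preorder ι] [IsDirectedOrder ι]
    {f : α → ι → ℝ≥0∞} (hf : ∀ a, Monotone (f a)) :
    ∑' a, ⨆ i, f a i = ⨆ i, ∑' a, f a i := by
  simp_rw [ENNReal.tsum_eq_iSup_sum, ENNReal.finsetSum_iSup_of_monotone hf]
  exact iSup_comm

lemma dplus_mono {f g : V × V → ℝ≥0} (h : f ≤ g) (x : V) : dplus f x ≤ dplus g x :=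
  ENNReal.tsum_le_tsum fun _ => ENNReal.coe_le_coe.mpr (h _)

section Supremum

variable {ι : Type*} [Preorder ι] [IsDirectedOrder ι] {F : ι → V × V → ℝ≥0}

lemma dplus_iSup (hF : Monotone F) (hbdd : ∀ e, BddAbove (Set.range fun i => F i e)) (x : V) :
    dplus (fun e => ⨆ i, F i e) x = ⨆ i, dplus (F i) x := by
  simp only [dplus, ENNReal.coe_iSup (hbdd _)]
  exact ENNReal.tsum_iSup_of_monotone fun _ _ _ hij => ENNReal.coe_le_coe.mpr (hF hij _)

lemma dminus_iSup (hF : Monotone F) (hbdd : ∀ e, BddAbove (Set.range fun i => F i e)) (x : V) :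
    dminus (fun e => ⨆ i, F i e) x = ⨆ i, dminus (F i) x := by
  simp only [dminus, ENNReal.coe_iSup (hbdd _)]
  exact ENNReal.tsum_iSup_of_monotone fun _ _ _ hij => ENNReal.coe_le_coe.mpr (hF hij _)

end Supremum

lemma IsCurrent.apply_le_weight {W : Web V} {f : V × V → ℝ≥0} (hf : IsCurrent W f)
    (e : V × V) : f e ≤ W.w e.1 := by
  have : (f e : ℝ≥0∞) ≤ dplus f e.1 := ENNReal.le_tsum (f := fun v => (f (e.1, v) : ℝ≥0∞)) e.2
  exact_mod_cast this.trans (hf.out_le e.1)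

lemma bddAbove_range_of_isCurrent {W : Web V} {ι : Type*} {F : ι → V × V → ℝ≥0}
    (hcur : ∀ i, IsCurrent W (F i)) (e : V × V) : BddAbove (Set.range fun i => F i e) :=
  ⟨W.w e.1, by rintro _ ⟨i, rfl⟩; exact (hcur i).apply_le_weight e⟩

lemma isWave_zero (W : Web V) : IsWave W (fun _ => 0) := by
  have hdplus (x : V) : dplus (fun _ => 0) x = 0 := by simp [dplus]
  have hdminus (x : V) : dminus (fun _ => 0) x = 0 := by simp [dminus]
  refine ⟨⟨fun _ _ => rfl, fun x => by simp [hdplus], fun x => by simp [hdminus],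
    fun x _ => by simp [hdplus, hdminus], fun a _ => hdminus a, fun b _ => hdplus b⟩, ?_,
    fun x _ => hdplus x⟩
  rintro p ⟨-, ⟨a, ha, hhead⟩, -⟩
  exact ⟨a, ⟨Or.inl ha, hdplus a⟩, List.mem_of_mem_head? hhead⟩

section Chain

variable {W : Web V} {ι : Type*} [Preorder ι] [IsDirectedOrder ι] {F : ι → V × V → ℝ≥0}

lemma isCurrent_iSup (hcur : ∀ i, IsCurrent W (F i)) (hF : Monotone F) :
    IsCurrent W (fun e => ⨆ i, F i e) := by
  have hbdd := bddAbove_range_of_isCurrent hcur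
  refine ⟨fun e he => ?_, fun x => ?_, fun x => ?_, fun x hx => ?_, fun a ha => ?_, fun b hb => ?_⟩
  · exact le_antisymm (ciSup_le' fun i => ((hcur i).supp e he).le) zero_le
  · rw [dplus_iSup hF hbdd]
    exact iSup_le fun i => (hcur i).out_le x
  · rw [dminus_iSup hF hbdd]
    exact iSup_le fun i => (hcur i).in_le x
  · rw [dplus_iSup hF hbdd, dminus_iSup hF hbdd]
    exact iSup_mono fun i => (hcur i).flow_ineq x hx
  · rw [dminus_iSup hF hbdd, ENNReal.iSup_eq_zero]
    exact fun i => (hcur i).a_in a ha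
  · rw [dplus_iSup hF hbdd, ENNReal.iSup_eq_zero]
    exact fun i => (hcur i).b_out b hb

lemma mem_TER_iSup_of_frequently (hcur : ∀ i, IsCurrent W (F i)) (hF : Monotone F) {y : V}
    (hy : ∃ᶠ i in atTop, y ∈ TER W (F i)) : y ∈ TER W (fun e => ⨆ i, F i e) := by
  have hbdd := bddAbove_range_of_isCurrent hcur
  refine ⟨?_, ?_⟩
  · refine or_iff_not_imp_left.mpr fun hyA => ?_
    obtain ⟨j, hjSAT, -⟩ := hy.exists
    rw [dminus_iSup hF hbdd]
    refine le_antisymm (iSup_le fun i => (hcur i).in_le y) ?_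
    exact (hjSAT.resolve_left hyA).symm.le.trans (le_iSup (fun i => dminus (F i) y) j)
  · show dplus _ y = 0
    rw [dplus_iSup hF hbdd, ENNReal.iSup_eq_zero]
    intro i
    obtain ⟨j, ⟨-, hjSINK⟩, hij⟩ := (hy.and_eventually (eventually_ge_atTop i)).exists
    exact nonpos_iff_eq_zero.mp ((dplus_mono (hF hij) y).trans_eq hjSINK)

lemma exists_mem_TER_iSup_of_eventually [Nonempty ι] (hcur : ∀ i, IsCurrent W (F i))
    (hF : Monotone F) {p : List V} (hp : ∀ᶠ i in atTop, ∃ x ∈ TER W (F i), x ∈ p) :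
    ∃ x ∈ TER W (fun e => ⨆ i, F i e), x ∈ p := by
  obtain ⟨x, hxp, hx⟩ : ∃ x ∈ {x | x ∈ p}, ∃ᶠ i in atTop, x ∈ TER W (F i) :=
    (frequently_exists_finite (List.finite_toSet p)).mp
      (hp.mono fun _ ⟨x, hx, hxp⟩ => ⟨x, hxp, hx⟩).frequently
  exact ⟨x, mem_TER_iSup_of_frequently hcur hF hx, hxp⟩

end Chain

theorem stmt1 (W : Web V) (I : Type) [LinearOrder I] (F : I → (V × V → ℝ≥0))
    (hwave : ∀ i, IsWave W (F i)) (hmono : ∀ i j, i ≤ j → ∀ e, F i e ≤ F j e) :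
    IsWave W (fun e => ⨆ i, F i e) := by
  rcases isEmpty_or_nonempty I with hI | hI
  · simpa only [ciSup_of_empty, bot_eq_zero] using isWave_zero W
  have hcur i := (hwave i).1
  have hF : Monotone F := fun i j hij e => hmono i j hij e
  refine ⟨isCurrent_iSup hcur hF, fun p hp => exists_mem_TER_iSup_of_eventually hcur hF
    (Eventually.of_forall fun i => (hwave i).2.1 p hp), fun x hx => ?_⟩
  rw [dplus_iSup hF (bddAbove_range_of_isCurrent hcur), ENNReal.iSup_eq_zero]
  intro i
  by_contra hne
  refine hx fun p hp => exists_mem_TER_iSup_of_eventually hcur hF ?_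
  filter_upwards [eventually_ge_atTop i] with j hij
  have hRF : x ∈ RF W (TER W (F j)) := by
    by_contra hxj
    exact hne (nonpos_iff_eq_zero.mp ((dplus_mono (hF hij) x).trans_eq ((hwave j).2.2 x hxj)))
  exact hRF p hp
end

section
/- Let Δ=(D,c,s,t) be a countable network. Then there exists an s–t cut F whose capacity c[F] equals σ, the infimum of capacities of all s–t cuts; i.e., the infimum is attained. -/
open scoped ENNReal NNReal Classical

variable {V : Type}

/-!
Choose cuts `S n` whose capacities tend to `σ` and let `S` be their limit along an ultrafilter
finer than `atTop`. Each finite set of edges of `E(S, V∖S)` lies in `E(S n, V∖S n)` for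
ultrafilter-many `n`, so its capacity is at most `σ + ε`; as `c[E(S, V∖S)]` is the supremum of
these finite partial sums, it is at most `σ`.
-/

open Filter Topology

section LimitCut

variable {ι : Type*} {N : Network V} {S : ι → Set V}

theorem isCut_liminf {l : Filter ι} [l.NeBot] (hS : ∀ i, IsCut N (S i)) :
    IsCut N (liminf S l) := by
  simp only [IsCut, mem_liminf_iff_eventually_mem]
  exact ⟨.of_forall fun i => (hS i).1, fun ht => ht.exists.elim fun i hi => (hS i).2 hi⟩

theorem sum_le_cutCap {T : Set V} {F : Finset (V × V)} (hF : ↑F ⊆ cutEdges N T) :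
    ∑ e ∈ F, (N.c e : ℝ≥0∞) ≤ cutCap N T :=
  calc ∑ e ∈ F, (N.c e : ℝ≥0∞)
      = ∑ e ∈ F, (cutEdges N T).indicator (fun e => (N.c e : ℝ≥0∞)) e :=
        Finset.sum_congr rfl fun _ he =>
          (Set.indicator_of_mem (hF he) (fun e => (N.c e : ℝ≥0∞))).symm
    _ ≤ ∑' e, (cutEdges N T).indicator (fun e => (N.c e : ℝ≥0∞)) e := ENNReal.sum_le_tsum F
    _ = cutCap N T := (tsum_subtype _ _).symm

namespace Ultrafilter

variable (U : Ultrafilter ι)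

theorem eventually_mem_cutEdges_of_mem_liminf {e : V × V}
    (he : e ∈ cutEdges N (liminf S (U : Filter ι))) :
    ∀ᶠ i in (U : Filter ι), e ∈ cutEdges N (S i) := by
  obtain ⟨heE, he₁, he₂⟩ := he
  rw [mem_liminf_iff_eventually_mem] at he₁ he₂
  filter_upwards [he₁, U.eventually_not.2 he₂] with i h₁ h₂ using ⟨heE, h₁, h₂⟩

theorem cutCap_liminf_le {a : ℝ≥0∞} (h : ∀ᶠ i in (U : Filter ι), cutCap N (S i) ≤ a) :
    cutCap N (liminf S (U : Filter ι)) ≤ a := by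
  rw [cutCap, ENNReal.tsum_eq_iSup_sum]
  refine iSup_le fun F => ?_
  have hF : ∀ᶠ i in (U : Filter ι), ∀ e ∈ F, ↑e ∈ cutEdges N (S i) :=
    (eventually_all_finset F).2 fun e _ => U.eventually_mem_cutEdges_of_mem_liminf e.2
  obtain ⟨i, hFi, hi⟩ := (hF.and h).exists
  calc ∑ e ∈ F, (N.c e : ℝ≥0∞)
      = ∑ e ∈ F.map (Function.Embedding.subtype _), (N.c e : ℝ≥0∞) :=
        (Finset.sum_map F (Function.Embedding.subtype _) fun e => (N.c e : ℝ≥0∞)).symm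
    _ ≤ cutCap N (S i) := sum_le_cutCap (by simpa [Set.subset_def] using hFi)
    _ ≤ a := hi

end Ultrafilter

end LimitCut

theorem exists_seq_isCut_tendsto_iInf_cutCap (N : Network V) :
    ∃ S : ℕ → Set V, (∀ n, IsCut N (S n)) ∧
      Tendsto (fun n => cutCap N (S n)) atTop (𝓝 (⨅ (T : Set V) (_ : IsCut N T), cutCap N T)) := by
  have hne : {T | IsCut N T}.Nonempty := ⟨{N.t}ᶜ, by simp [IsCut, N.ne]⟩
  obtain ⟨u, -, -, hu, hmem⟩ :=
    (isGLB_biInf (s := {T | IsCut N T}) (f := cutCap N)).exists_seq_antitone_tendsto (hne.image _)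
  choose S hS hSu using hmem
  exact ⟨S, hS, hu.congr fun n => (hSu n).symm⟩

theorem stmt14_general (N : Network V) :
    ∃ S, IsCut N S ∧ cutCap N S = ⨅ (T : Set V) (_ : IsCut N T), cutCap N T := by
  obtain ⟨S, hS, hlim⟩ := exists_seq_isCut_tendsto_iInf_cutCap N
  let U := Ultrafilter.of (atTop : Filter ℕ)
  have hU := hlim.mono_left (Ultrafilter.of_le atTop)
  have hcut : IsCut N (liminf S (U : Filter ℕ)) := isCut_liminf hS
  refine ⟨liminf S U, hcut, le_antisymm ?_ (iInf₂_le _ hcut)⟩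
  exact le_of_forall_gt_imp_ge_of_dense fun b hb =>
    U.cutCap_liminf_le ((hU.eventually (gt_mem_nhds hb)).mono fun _ => le_of_lt)

theorem stmt14 [Countable V] (N : Network V) :
    ∃ S, IsCut N S ∧ cutCap N S = ⨅ (T : Set V) (_ : IsCut N T), cutCap N T :=
  stmt14_general N
end

section
/- In every countable network, the supremum τ_m of the values of mundane flows equals the infimum σ of the capacities of s–t cuts. -/
open scoped ENNReal NNReal Classical

variable {V : Type}

/-!
Every path of a mundane flow crosses every cut, which gives `τ_m ≤ σ`. Conversely, fix
`ρ < σ`. By compactness of `V → Bool` there is a finite set `F` of edges on which every cut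
still has capacity above `ρ`. Scale the capacities on `F` by `n` and round down: the integral
max-flow min-cut theorem (Ford–Fulkerson), followed by a decomposition of the maximal integral
flow into paths, yields `s`–`t` paths which, weighted by `1/n`, form a mundane flow of value
at least `ρ - |F|/n`.
-/

namespace List

variable {α : Type*} {l : List α} {a b c : α}

theorem mem_consecutivePairs_iff :
    (a, b) ∈ l.consecutivePairs ↔ ∃ i, l[i]? = some a ∧ l[i + 1]? = some b := by
  simp [mem_iff_getElem?, getElem?_zip_eq_some]

theorem mem_consecutivePairs_cons_cons {l : List α} {e : α × α} :
    e ∈ (a :: b :: l).consecutivePairs ↔ e = (a, b) ∨ e ∈ (b :: l).consecutivePairs := by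
  simp [consecutivePairs]

theorem Nodup.eq_of_getElem?_eq_some {i j : ℕ} (hl : l.Nodup) (hi : l[i]? = some a)
    (hj : l[j]? = some a) : i = j :=
  (getElem?_inj (getElem?_eq_some_iff.1 hi).1 hl).1 (hi.trans hj.symm)

theorem Nodup.eq_of_mem_consecutivePairs_left (hl : l.Nodup) (hb : (a, b) ∈ l.consecutivePairs)
    (hc : (a, c) ∈ l.consecutivePairs) : b = c := by
  obtain ⟨i, hia, hib⟩ := mem_consecutivePairs_iff.1 hb
  obtain ⟨j, hja, hjc⟩ := mem_consecutivePairs_iff.1 hc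
  obtain rfl := hl.eq_of_getElem?_eq_some hia hja
  exact Option.some_injective _ (hib.symm.trans hjc)

theorem Nodup.eq_of_mem_consecutivePairs_right (hl : l.Nodup) (ha : (a, c) ∈ l.consecutivePairs)
    (hb : (b, c) ∈ l.consecutivePairs) : a = b := by
  obtain ⟨i, hia, hic⟩ := mem_consecutivePairs_iff.1 ha
  obtain ⟨j, hjb, hjc⟩ := mem_consecutivePairs_iff.1 hb
  obtain rfl : i = j := by have := hl.eq_of_getElem?_eq_some hic hjc; omega
  exact Option.some_injective _ (hia.symm.trans hjb)

theorem exists_mem_consecutivePairs_left_iff (h : l.getLast? ≠ some a) :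
    (∃ b, (a, b) ∈ l.consecutivePairs) ↔ a ∈ l := by
  refine ⟨fun ⟨b, hb⟩ => (of_mem_zip hb).1, fun ha => ?_⟩
  obtain ⟨i, hi⟩ := mem_iff_getElem?.1 ha
  have hlt : i + 1 < l.length := by
    have := (getElem?_eq_some_iff.1 hi).1
    by_contra!
    obtain rfl : i = l.length - 1 := by omega
    exact h (getLast?_eq_getElem? ▸ hi)
  exact ⟨l[i + 1], mem_consecutivePairs_iff.2 ⟨i, hi, getElem?_eq_getElem hlt⟩⟩

theorem exists_mem_consecutivePairs_right_iff (h : l.head? ≠ some b) :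
    (∃ a, (a, b) ∈ l.consecutivePairs) ↔ b ∈ l := by
  refine ⟨fun ⟨a, ha⟩ => mem_of_mem_tail (of_mem_zip ha).2, fun hb => ?_⟩
  obtain ⟨_ | i, hi⟩ := mem_iff_getElem?.1 hb
  · exact absurd (head?_eq_getElem? ▸ hi) h
  · have hlt : i < l.length := by have := (getElem?_eq_some_iff.1 hi).1; omega
    exact ⟨l[i], mem_consecutivePairs_iff.2 ⟨i, getElem?_eq_getElem hlt, hi⟩⟩

theorem isChain_iff_forall_mem_consecutivePairs {R : α → α → Prop} :
    l.IsChain R ↔ ∀ a b, (a, b) ∈ l.consecutivePairs → R a b := by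
  simp only [isChain_iff_getElem, mem_consecutivePairs_iff]
  constructor
  · rintro h a b ⟨i, ha, hb⟩
    obtain ⟨hi, rfl⟩ := getElem?_eq_some_iff.1 hb
    obtain ⟨_, rfl⟩ := getElem?_eq_some_iff.1 ha
    exact h i hi
  · intro h i hi
    exact h _ _ ⟨i, getElem?_eq_getElem _, getElem?_eq_getElem hi⟩

theorem IsChain.rel_of_mem_consecutivePairs {R : α → α → Prop} (hl : l.IsChain R)
    (h : (a, b) ∈ l.consecutivePairs) : R a b :=
  isChain_iff_forall_mem_consecutivePairs.1 hl a b h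

theorem exists_mem_consecutivePairs_mem_notMem {S : Set α} (ha : l.head? = some a)
    (hb : l.getLast? = some b) (haS : a ∈ S) (hbS : b ∉ S) :
    ∃ e ∈ l.consecutivePairs, e.1 ∈ S ∧ e.2 ∉ S := by
  by_contra! h
  have hl : l.IsChain (fun x y => x ∈ S → y ∈ S) :=
    isChain_iff_forall_mem_consecutivePairs.2 fun x y hxy => h (x, y) hxy
  exact hbS (hl.induction (· ∈ S) _ (fun _ _ h => h)
    (fun hne => by simp_all [head?_eq_some_head hne]) b (mem_of_getLast? hb))

theorem exists_nodup_isChain_of_reflTransGen {R : α → α → Prop} {a b : α}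
    (h : Relation.ReflTransGen R a b) :
    ∃ l, (a :: l).IsChain R ∧ (a :: l).Nodup ∧ (a :: l).getLast? = some b := by
  induction h using Relation.ReflTransGen.head_induction_on with
  | refl => exact ⟨[], isChain_singleton _, nodup_singleton _, rfl⟩
  | @head a c hac _ ih =>
    obtain ⟨l, hchain, hnd, hlast⟩ := ih
    by_cases ha : a ∈ c :: l
    · obtain ⟨u, w, huw⟩ := append_of_mem ha
      rw [huw] at hchain hnd hlast
      refine ⟨w, hchain.right_of_append, hnd.sublist (sublist_append_right u _), ?_⟩
      rwa [getLast?_append_of_ne_nil _ (cons_ne_nil _ _)] at hlast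
    · exact ⟨c :: l, hchain.cons_cons hac, nodup_cons.2 ⟨ha, hnd⟩, by simpa using hlast⟩

end List

theorem tsum_ite_eq_ite_exists {α M : Type*} [AddCommMonoid M] [TopologicalSpace M]
    {P : α → Prop} [DecidablePred P] (hP : ∀ a b, P a → P b → a = b) (m : M) :
    ∑' a, (if P a then m else 0) = if ∃ a, P a then m else 0 := by
  by_cases h : ∃ a, P a
  · obtain ⟨a, ha⟩ := h
    rw [if_pos ⟨a, ha⟩]
    refine (tsum_congr fun b => if_congr ?_ rfl rfl).trans (tsum_ite_eq a fun _ => m)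
    exact ⟨fun hb => hP _ _ hb ha, fun hb => hb ▸ ha⟩
  · simp_all

theorem sum_le_sum_floor_add_card_div {ι : Type*} (F : Finset ι) (c : ι → ℝ≥0) {n : ℕ}
    (hn : (0 : ℝ≥0) < n) :
    ∑ i ∈ F, c i ≤ ((∑ i ∈ F, ⌊(n : ℝ≥0) * c i⌋₊ : ℕ) + F.card) / n := by
  rw [le_div_iff₀ hn, Finset.sum_mul, Finset.card_eq_sum_ones]
  push_cast
  rw [← Finset.sum_add_distrib]
  exact Finset.sum_le_sum fun i _ => by rw [mul_comm]; exact (Nat.lt_floor_add_one _).le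

theorem isWalk_iff {E : Set (V × V)} {p : List V} :
    IsWalk E p ↔ p.IsChain (fun a b => (a, b) ∈ E) := Iff.rfl

def IsPathIn (E : Set (V × V)) (s t : V) (p : List V) : Prop :=
  IsWalk E p ∧ p.head? = some s ∧ p.getLast? = some t ∧ p.Nodup

theorem isSTPath_iff {N : Network V} {p : List V} : IsSTPath N p ↔ IsPathIn N.E N.s N.t p :=
  Iff.rfl

theorem IsPathIn.mono {E E' : Set (V × V)} {s t : V} {p : List V} (hp : IsPathIn E s t p)
    (h : E ⊆ E') : IsPathIn E' s t p :=
  ⟨(isWalk_iff.1 hp.1).imp fun _ _ hab => h hab, hp.2⟩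

namespace IntFlow

variable {E : Finset (V × V)} {κ : V × V → ℕ} {s t : V} {g h : V × V → ℤ}

noncomputable def excess (E : Finset (V × V)) (g : V × V → ℤ) (x : V) : ℤ :=
  ∑ e ∈ E, ((if e.1 = x then g e else 0) - (if e.2 = x then g e else 0))

theorem excess_add : excess E (g + h) = excess E g + excess E h := by
  funext x
  simp only [excess, Pi.add_apply, ← Finset.sum_add_distrib]
  refine Finset.sum_congr rfl fun e _ => ?_
  split_ifs <;> ring

theorem excess_sub : excess E (g - h) = excess E g - excess E h := by
  funext x
  simp only [excess, Pi.sub_apply, ← Finset.sum_sub_distrib]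
  refine Finset.sum_congr rfl fun e _ => ?_
  split_ifs <;> ring

theorem excess_single {e : V × V} (he : e ∈ E) :
    excess E (Pi.single e 1) = Pi.single e.1 1 - Pi.single e.2 1 := by
  funext x
  rw [excess, Finset.sum_eq_single_of_mem e he fun e' _ he' => by simp [he']]
  simp [Pi.single_apply, eq_comm]

theorem sum_excess (T : Finset V) :
    ∑ x ∈ T, excess E g x =
      ∑ e ∈ E, ((if e.1 ∈ T then g e else 0) - (if e.2 ∈ T then g e else 0)) := by
  simp only [excess]
  rw [Finset.sum_comm]
  refine Finset.sum_congr rfl fun e _ => ?_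
  rw [Finset.sum_sub_distrib, Finset.sum_ite_eq, Finset.sum_ite_eq]

def Conserves (E : Finset (V × V)) (s t : V) (g : V × V → ℤ) : Prop :=
  ∀ x, x ≠ s → x ≠ t → excess E g x = 0

theorem Conserves.excess_eq_cut (hg : Conserves E s t g) {S : Set V} (hs : s ∈ S)
    (ht : t ∉ S) :
    excess E g s = ∑ e ∈ E with e.1 ∈ S ∧ e.2 ∉ S, g e -
      ∑ e ∈ E with e.1 ∉ S ∧ e.2 ∈ S, g e := by
  set T := (insert s (E.image Prod.fst ∪ E.image Prod.snd)).filter (· ∈ S)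
  have hT : ∀ e ∈ E, (e.1 ∈ T ↔ e.1 ∈ S) ∧ (e.2 ∈ T ↔ e.2 ∈ S) := fun e he => by
    simp only [T, Finset.mem_filter, Finset.mem_insert, Finset.mem_union, Finset.mem_image]
    exact ⟨and_iff_right (.inr (.inl ⟨e, he, rfl⟩)),
      and_iff_right (.inr (.inr ⟨e, he, rfl⟩))⟩
  calc excess E g s = ∑ x ∈ T, excess E g x := by
        refine (Finset.sum_eq_single_of_mem s (by simp [T, hs]) fun x hx hxs =>
          hg x hxs ?_).symm
        rintro rfl
        exact ht (Finset.mem_filter.1 hx).2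
    _ = ∑ e ∈ E, ((if e.1 ∈ S ∧ e.2 ∉ S then g e else 0) -
          (if e.1 ∉ S ∧ e.2 ∈ S then g e else 0)) := by
        rw [sum_excess]
        refine Finset.sum_congr rfl fun e he => ?_
        simp only [(hT e he).1, (hT e he).2]
        by_cases h₁ : e.1 ∈ S <;> by_cases h₂ : e.2 ∈ S <;> simp [h₁, h₂]
    _ = _ := by rw [Finset.sum_sub_distrib, Finset.sum_filter, Finset.sum_filter]

def IsFeasible (κ : V × V → ℕ) (g : V × V → ℤ) : Prop :=
  ∀ e, 0 ≤ g e ∧ g e ≤ κ e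

def ResRel (E : Finset (V × V)) (κ : V × V → ℕ) (g : V × V → ℤ) (a b : V) : Prop :=
  ((a, b) ∈ E ∧ g (a, b) < κ (a, b)) ∨ ((b, a) ∈ E ∧ 0 < g (b, a))

theorem exists_augment_step {a b : V} (hg : IsFeasible κ g) (hab : ResRel E κ g a b) :
    ∃ g', IsFeasible κ g' ∧ excess E g' = excess E g + (Pi.single a 1 - Pi.single b 1) ∧
      ∀ e, e.1 ≠ a → e.2 ≠ a → g' e = g e := by
  rcases hab with ⟨hE, hlt⟩ | ⟨hE, hpos⟩
  · refine ⟨g + Pi.single (a, b) 1, fun e => ?_, by rw [excess_add, excess_single hE],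
      fun e he _ => by simp [Prod.ext_iff, he]⟩
    by_cases he : e = (a, b)
    · subst he; have := hg (a, b); simp; omega
    · simpa [he] using hg e
  · refine ⟨g - Pi.single (b, a) 1, fun e => ?_, ?_, fun e _ he => by simp [Prod.ext_iff, he]⟩
    · by_cases he : e = (b, a)
      · subst he; have := hg (b, a); simp; omega
      · simpa [he] using hg e
    · rw [excess_sub, excess_single hE]; abel

theorem exists_augment_path (l : List V) :
    ∀ {a b : V} {g : V × V → ℤ}, (a :: l).IsChain (ResRel E κ g) → (a :: l).Nodup →
      (a :: l).getLast? = some b → IsFeasible κ g →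
      ∃ g', IsFeasible κ g' ∧ excess E g' = excess E g + (Pi.single a 1 - Pi.single b 1) := by
  induction l with
  | nil =>
    intro a b g _ _ hb hg
    obtain rfl : a = b := by simpa using hb
    exact ⟨g, hg, by simp⟩
  | cons c l ih =>
    intro a b g hchain hnd hb hg
    obtain ⟨hac, hchain⟩ := List.isChain_cons_cons.1 hchain
    obtain ⟨ha, hnd⟩ := List.nodup_cons.1 hnd
    obtain ⟨g₁, hg₁, hexc₁, hsame⟩ := exists_augment_step hg hac
    have hchain₁ : (c :: l).IsChain (ResRel E κ g₁) :=
      hchain.imp_of_mem_imp fun x y hx hy hxy => by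
        have hxa : x ≠ a := fun h => ha (h ▸ hx)
        have hya : y ≠ a := fun h => ha (h ▸ hy)
        unfold ResRel at hxy ⊢
        rwa [hsame (x, y) hxa hya, hsame (y, x) hya hxa]
    obtain ⟨g₂, hg₂, hexc₂⟩ := ih hchain₁ hnd (by simpa using hb) hg₁
    exact ⟨g₂, hg₂, by rw [hexc₂, hexc₁]; abel⟩

theorem excess_le_sum (hg : IsFeasible κ g) (x : V) : excess E g x ≤ ∑ e ∈ E, (κ e : ℤ) :=
  Finset.sum_le_sum fun e _ => by have := hg e; split_ifs <;> omega

theorem exists_flow_without_augmenting_path (hst : s ≠ t) :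
    ∃ g, IsFeasible κ g ∧ Conserves E s t g ∧
      ¬ Relation.ReflTransGen (ResRel E κ g) s t := by
  -- A flow of maximal value exists since values are bounded integers; an augmenting path
  -- would increase its value by one.
  obtain ⟨_, ⟨g, hg, hc, rfl⟩, hmax⟩ := Int.exists_greatest_of_bdd
    (P := fun v => ∃ g, IsFeasible κ g ∧ Conserves E s t g ∧ excess E g s = v)
    ⟨_, fun _ ⟨g, hg, _, hv⟩ => hv ▸ excess_le_sum hg s⟩
    ⟨0, 0, fun e => by simp, fun x _ _ => by simp [excess], by simp [excess]⟩
  refine ⟨g, hg, hc, fun hreach => ?_⟩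
  obtain ⟨l, hchain, hnd, hlast⟩ := List.exists_nodup_isChain_of_reflTransGen hreach
  obtain ⟨g', hg', hexc⟩ := exists_augment_path l hchain hnd hlast hg
  have := hmax _ ⟨g', hg', fun x hxs hxt => by simp [hexc, hc x hxs hxt, hxs, hxt], rfl⟩
  simp [hexc, hst.symm] at this

theorem exists_cut_eq_excess (hg : IsFeasible κ g) (hc : Conserves E s t g)
    (hnr : ¬ Relation.ReflTransGen (ResRel E κ g) s t) :
    ∃ S : Set V, s ∈ S ∧ t ∉ S ∧
      ∑ e ∈ E with e.1 ∈ S ∧ e.2 ∉ S, (κ e : ℤ) = excess E g s := by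
  set S : Set V := {x | Relation.ReflTransGen (ResRel E κ g) s x}
  have hout : ∑ e ∈ E with e.1 ∈ S ∧ e.2 ∉ S, g e =
      ∑ e ∈ E with e.1 ∈ S ∧ e.2 ∉ S, (κ e : ℤ) :=
    Finset.sum_congr rfl fun e he => by
      simp only [Finset.mem_filter] at he
      by_contra hne
      exact he.2.2 (he.2.1.tail (.inl ⟨he.1, lt_of_le_of_ne (hg e).2 hne⟩))
  have hin : ∑ e ∈ E with e.1 ∉ S ∧ e.2 ∈ S, g e = 0 :=
    Finset.sum_eq_zero fun e he => by
      simp only [Finset.mem_filter] at he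
      by_contra hne
      exact he.2.1 (he.2.2.tail (.inr ⟨he.1, lt_of_le_of_ne (hg e).1 (Ne.symm hne)⟩))
  exact ⟨S, .refl, hnr, by rw [hc.excess_eq_cut (S := S) .refl hnr, hout, hin, sub_zero]⟩

theorem reflTransGen_of_excess_pos (hnn : 0 ≤ g) (hc : Conserves E s t g)
    (h : 0 < excess E g s) :
    Relation.ReflTransGen (fun a b => (a, b) ∈ E ∧ 0 < g (a, b)) s t := by
  by_contra hnr
  set S : Set V := {x | Relation.ReflTransGen (fun a b => (a, b) ∈ E ∧ 0 < g (a, b)) s x}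
  have hout : ∑ e ∈ E with e.1 ∈ S ∧ e.2 ∉ S, g e = 0 :=
    Finset.sum_eq_zero fun e he => by
      simp only [Finset.mem_filter] at he
      by_contra hne
      exact he.2.2 (he.2.1.tail ⟨he.1, lt_of_le_of_ne (hnn e) (Ne.symm hne)⟩)
  have hin : 0 ≤ ∑ e ∈ E with e.1 ∉ S ∧ e.2 ∈ S, g e :=
    Finset.sum_nonneg fun e _ => hnn e
  rw [hc.excess_eq_cut (S := S) .refl hnr, hout] at h
  omega

noncomputable def pathIndicator (p : List V) (e : V × V) : ℤ :=
  if e ∈ p.consecutivePairs then 1 else 0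

theorem pathIndicator_cons_cons {a c : V} {l : List V} (ha : a ∉ c :: l) :
    pathIndicator (a :: c :: l) = Pi.single (a, c) 1 + pathIndicator (c :: l) := by
  have hac : (a, c) ∉ (c :: l).consecutivePairs := fun h => ha (List.of_mem_zip h).1
  funext e
  by_cases he : e = (a, c)
  · simp [pathIndicator, List.mem_consecutivePairs_cons_cons, he, hac]
  · simp [pathIndicator, List.mem_consecutivePairs_cons_cons, he]

theorem excess_pathIndicator (l : List V) :
    ∀ {a b : V}, (a :: l).IsChain (fun u v => (u, v) ∈ E) → (a :: l).Nodup →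
      (a :: l).getLast? = some b →
      excess E (pathIndicator (a :: l)) = Pi.single a 1 - Pi.single b 1 := by
  induction l with
  | nil =>
    intro a b _ _ hb
    obtain rfl : a = b := by simpa using hb
    funext x
    simp [excess, pathIndicator, List.consecutivePairs]
  | cons c l ih =>
    intro a b hchain hnd hb
    obtain ⟨hac, hchain⟩ := List.isChain_cons_cons.1 hchain
    obtain ⟨ha, hnd⟩ := List.nodup_cons.1 hnd
    rw [pathIndicator_cons_cons ha, excess_add, excess_single hac,
      ih hchain hnd (by simpa using hb)]
    abel

theorem exists_isPathIn_excess_sub_pathIndicator (hst : s ≠ t) (hnn : 0 ≤ g)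
    (hc : Conserves E s t g) (h : 0 < excess E g s) :
    ∃ p, IsPathIn ↑E s t p ∧ pathIndicator p ≤ g ∧
      Conserves E s t (g - pathIndicator p) ∧
      excess E (g - pathIndicator p) s = excess E g s - 1 := by
  obtain ⟨l, hchain, hnd, hlast⟩ :=
    List.exists_nodup_isChain_of_reflTransGen (reflTransGen_of_excess_pos hnn hc h)
  have hE : (s :: l).IsChain (fun u v => (u, v) ∈ E) := hchain.imp fun _ _ h => h.1
  have hexc := excess_pathIndicator l hE hnd hlast
  refine ⟨s :: l, ⟨hE, rfl, hlast, hnd⟩, fun e => ?_, fun x hxs hxt => ?_, ?_⟩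
  · unfold pathIndicator
    split_ifs with he
    · exact (hchain.rel_of_mem_consecutivePairs he).2
    · exact hnn e
  · simp [excess_sub, hexc, hc x hxs hxt, hxs, hxt]
  · simp [excess_sub, hexc, hst]

theorem exists_path_decomposition (hst : s ≠ t) (n : ℕ) :
    ∀ {g : V × V → ℤ}, 0 ≤ g → Conserves E s t g → excess E g s ≤ n →
      ∃ L : List (List V), (∀ p ∈ L, IsPathIn ↑E s t p) ∧
        (∀ e, (L.countP (e ∈ ·.consecutivePairs) : ℤ) ≤ g e) ∧
        excess E g s ≤ L.length := by
  induction n with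
  | zero =>
    exact fun hnn _ hn => ⟨[], by simp, fun e => by simpa using hnn e, by simpa using hn⟩
  | succ n ih =>
    intro g hnn hc hn
    by_cases hpos : excess E g s ≤ 0
    · exact ⟨[], by simp, fun e => by simpa using hnn e, by simpa using hpos⟩
    obtain ⟨p, hp, hle, hc', hval⟩ :=
      exists_isPathIn_excess_sub_pathIndicator hst hnn hc (not_le.1 hpos)
    obtain ⟨L, hL, hload, hlen⟩ := ih (sub_nonneg.2 hle) hc' (by omega)
    refine ⟨p :: L, List.forall_mem_cons.2 ⟨hp, hL⟩, fun e => ?_, ?_⟩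
    · have h := hload e
      rw [Pi.sub_apply, pathIndicator] at h
      by_cases he : e ∈ p.consecutivePairs <;> simp [he] at h ⊢ <;> omega
    · rw [List.length_cons]; push_cast; omega

theorem exists_paths_and_cut (E : Finset (V × V)) (κ : V × V → ℕ) (hst : s ≠ t) :
    ∃ (L : List (List V)) (S : Set V), s ∈ S ∧ t ∉ S ∧
      (∀ p ∈ L, IsPathIn ↑E s t p) ∧
      (∀ e, L.countP (e ∈ ·.consecutivePairs) ≤ κ e) ∧
      ∑ e ∈ E with e.1 ∈ S ∧ e.2 ∉ S, κ e ≤ L.length := by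
  obtain ⟨g, hg, hc, hmax⟩ := exists_flow_without_augmenting_path (E := E) hst
  obtain ⟨S, hs, ht, hcut⟩ := exists_cut_eq_excess hg hc hmax
  obtain ⟨L, hL, hload, hlen⟩ := exists_path_decomposition hst (excess E g s).toNat
    (fun e => (hg e).1) hc (Int.self_le_toNat _)
  refine ⟨L, S, hs, ht, hL, fun e => by exact_mod_cast (hload e).trans (hg e).2, ?_⟩
  exact_mod_cast hcut.le.trans hlen

end IntFlow

theorem IsSTPath.exists_mem_cutEdges {N : Network V} {p : List V} {S : Set V}
    (hp : IsSTPath N p) (hS : IsCut N S) : ∃ e ∈ cutEdges N S, e ∈ p.consecutivePairs := by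
  obtain ⟨e, he, h₁, h₂⟩ :=
    p.exists_mem_consecutivePairs_mem_notMem hp.2.1 hp.2.2.1 hS.1 hS.2
  exact ⟨e, ⟨(isWalk_iff.1 hp.1).rel_of_mem_consecutivePairs he, h₁, h₂⟩, he⟩

namespace Network

variable {N : Network V} {f : V × V → ℝ≥0} {S : Set V}

theorem flowValue_le_cutCap_of_isMundane (hf : IsFlow N f) (hm : IsMundane N f)
    (hS : IsCut N S) : flowValue N f ≤ cutCap N S := by
  obtain ⟨ι, θ, P, -, hP, hfP⟩ := hm
  calc flowValue N f
      = ∑' i, ∑' v,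
          (if (N.s, v) ∈ (P i).consecutivePairs then (θ i : ℝ≥0∞) else 0) := by
        rw [flowValue, dplus, ENNReal.tsum_comm]; exact tsum_congr fun v => hfP _
    _ ≤ ∑' i, (θ i : ℝ≥0∞) := ENNReal.tsum_le_tsum fun i => by
        rw [tsum_ite_eq_ite_exists fun _ _ => (hP i).2.2.2.eq_of_mem_consecutivePairs_left]
        split_ifs <;> simp
    _ ≤ ∑' i, ∑' e : cutEdges N S,
          (if ↑e ∈ (P i).consecutivePairs then (θ i : ℝ≥0∞) else 0) :=
        ENNReal.tsum_le_tsum fun i => by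
          obtain ⟨e, hcut, he⟩ := (hP i).exists_mem_cutEdges hS
          simpa [he] using ENNReal.le_tsum (f := fun e : cutEdges N S =>
            if ↑e ∈ (P i).consecutivePairs then (θ i : ℝ≥0∞) else 0) ⟨e, hcut⟩
    _ = ∑' e : cutEdges N S, (f e : ℝ≥0∞) := by
        rw [ENNReal.tsum_comm]; exact tsum_congr fun e => (hfP e).symm
    _ ≤ cutCap N S := ENNReal.tsum_le_tsum fun e => by exact_mod_cast hf.cap e

noncomputable def pathFlow (L : List (List V)) (θ : ℝ≥0) (e : V × V) : ℝ≥0 :=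
  L.countP (e ∈ ·.consecutivePairs) * θ

variable {L : List (List V)} {θ : ℝ≥0}

theorem coe_pathFlow (e : V × V) :
    (pathFlow L θ e : ℝ≥0∞) =
      ∑ i : Fin L.length, if e ∈ L[i.1].consecutivePairs then (θ : ℝ≥0∞) else 0 := by
  rw [Fin.sum_univ_fun_getElem L fun p => if e ∈ p.consecutivePairs then (θ : ℝ≥0∞) else 0,
    List.sum_map_ite]
  simp [pathFlow, List.countP_eq_length_filter]

theorem dplus_pathFlow (hL : ∀ p ∈ L, p.Nodup) (x : V) :
    dplus (pathFlow L θ) x =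
      ∑ i : Fin L.length,
        if ∃ v, (x, v) ∈ L[i.1].consecutivePairs then (θ : ℝ≥0∞) else 0 := by
  simp only [dplus, coe_pathFlow]
  rw [Summable.tsum_finsetSum fun _ _ => ENNReal.summable]
  exact Finset.sum_congr rfl fun i _ => tsum_ite_eq_ite_exists
    (fun _ _ => (hL _ (L.getElem_mem _)).eq_of_mem_consecutivePairs_left) _

theorem dminus_pathFlow (hL : ∀ p ∈ L, p.Nodup) (x : V) :
    dminus (pathFlow L θ) x =
      ∑ i : Fin L.length,
        if ∃ u, (u, x) ∈ L[i.1].consecutivePairs then (θ : ℝ≥0∞) else 0 := by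
  simp only [dminus, coe_pathFlow]
  rw [Summable.tsum_finsetSum fun _ _ => ENNReal.summable]
  exact Finset.sum_congr rfl fun i _ => tsum_ite_eq_ite_exists
    (fun _ _ => (hL _ (L.getElem_mem _)).eq_of_mem_consecutivePairs_right) _

theorem isFlow_pathFlow (hL : ∀ p ∈ L, IsSTPath N p) (hcap : ∀ e, pathFlow L θ e ≤ N.c e) :
    IsFlow N (pathFlow L θ) where
  supp e he := by
    rw [pathFlow, List.countP_eq_zero.2 fun p hp hep => he ?_, Nat.cast_zero, zero_mul]
    exact (isWalk_iff.1 (hL p hp).1).rel_of_mem_consecutivePairs (of_decide_eq_true hep)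
  cap := hcap
  kirchhoff x hs ht := by
    rw [dplus_pathFlow (fun p hp => (hL p hp).2.2.2), dminus_pathFlow (fun p hp => (hL p hp).2.2.2)]
    refine Finset.sum_congr rfl fun i _ => if_congr ?_ rfl rfl
    have hp := hL _ (L.getElem_mem i.2)
    rw [List.exists_mem_consecutivePairs_left_iff (by rw [hp.2.2.1]; simpa using Ne.symm ht),
      List.exists_mem_consecutivePairs_right_iff (by rw [hp.2.1]; simpa using Ne.symm hs)]

theorem isMundane_pathFlow (hL : ∀ p ∈ L, IsSTPath N p) (hθ : 0 < θ) :
    IsMundane N (pathFlow L θ) :=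
  ⟨Fin L.length, fun _ => θ, fun i => L[i.1], fun _ => hθ, fun i => hL _ (L.getElem_mem i.2),
    fun e => by rw [tsum_fintype, coe_pathFlow]⟩

theorem flowValue_pathFlow (hL : ∀ p ∈ L, IsSTPath N p) :
    flowValue N (pathFlow L θ) = L.length * θ := by
  rw [flowValue, dplus_pathFlow (fun p hp => (hL p hp).2.2.2)]
  have hs : ∀ i : Fin L.length, ∃ v, (N.s, v) ∈ L[i.1].consecutivePairs := fun i => by
    have hp := hL _ (L.getElem_mem i.2)
    refine (List.exists_mem_consecutivePairs_left_iff ?_).2 (List.mem_of_mem_head? hp.2.1)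
    rw [hp.2.2.1]; simpa using N.ne.symm
  simp [hs]

noncomputable def cutCapOn (N : Network V) (F : Finset (V × V)) (S : Set V) : ℝ≥0∞ :=
  ∑ e ∈ F with e ∈ cutEdges N S, (N.c e : ℝ≥0∞)

theorem cutCap_eq_iSup_cutCapOn (S : Set V) : cutCap N S = ⨆ F, cutCapOn N F S := by
  rw [cutCap, tsum_subtype (cutEdges N S) fun e => (N.c e : ℝ≥0∞), ENNReal.tsum_eq_iSup_sum]
  simp only [cutCapOn, Finset.sum_filter, Set.indicator_apply]

theorem exists_isCut_cutCap_le {ρ : ℝ≥0∞}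
    (h : ∀ F, ∃ S, IsCut N S ∧ cutCapOn N F S ≤ ρ) :
    ∃ S, IsCut N S ∧ cutCap N S ≤ ρ := by
  -- A cut is encoded by its indicator `χ : V → Bool`; for a finite `F` the condition on `χ`
  -- involves finitely many coordinates, so it defines a closed subset of the compact space.
  let C (F : Finset (V × V)) : Set (V → Bool) :=
    {χ | IsCut N {v | χ v} ∧ cutCapOn N F {v | χ v} ≤ ρ}
  have hev (v : V) : Continuous fun χ : V → Bool => χ v := continuous_apply v
  have hclosed (F : Finset (V × V)) : IsClosed (C F) := by
    have hsum : Continuous fun χ : V → Bool =>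
        ∑ e ∈ F, if e ∈ cutEdges N {v | χ v} then (N.c e : ℝ≥0∞) else 0 :=
      continuous_finsetSum _ fun e _ => ((continuous_of_discreteTopology
        (f := fun b : Bool × Bool => if e ∈ N.E ∧ b.1 = true ∧ b.2 ≠ true then
          (N.c e : ℝ≥0∞) else 0)).comp ((hev e.1).prodMk (hev e.2))).congr fun χ => by
        split_ifs <;> simp_all [cutEdges]
    simp only [C, IsCut, cutCapOn, Set.ofPred_and, Finset.sum_filter]
    exact (((isClosed_discrete {b | b = true}).preimage (hev N.s)).inter
      ((isClosed_discrete {b | ¬b = true}).preimage (hev N.t))).inter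
      (isClosed_le hsum continuous_const)
  have hmono {F₁ F₂ : Finset (V × V)} (hF : F₁ ⊆ F₂) : C F₂ ⊆ C F₁ := fun _ hχ =>
    ⟨hχ.1, le_trans (Finset.sum_le_sum_of_subset (Finset.filter_subset_filter _ hF)) hχ.2⟩
  have hdir : Directed (· ⊇ ·) C := fun F₁ F₂ =>
    ⟨F₁ ∪ F₂, hmono Finset.subset_union_left, hmono Finset.subset_union_right⟩
  have hne (F : Finset (V × V)) : (C F).Nonempty := by
    obtain ⟨S, hS, hle⟩ := h F
    exact ⟨fun v => decide (v ∈ S), by simpa [C] using ⟨hS, hle⟩⟩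
  obtain ⟨χ, hχ⟩ := IsCompact.nonempty_iInter_of_directed_nonempty_isCompact_isClosed C hdir
    hne (fun F => (hclosed F).isCompact) hclosed
  simp only [Set.mem_iInter] at hχ
  refine ⟨{v | χ v}, (hχ ∅).1, ?_⟩
  rw [cutCap_eq_iSup_cutCapOn]
  exact iSup_le fun F => (hχ F).2

theorem exists_finset_lt_cutCapOn {ρ : ℝ≥0∞}
    (hρ : ρ < ⨅ (S : Set V) (_ : IsCut N S), cutCap N S) :
    ∃ F : Finset (V × V), ↑F ⊆ N.E ∧ ∀ S, IsCut N S → ρ < cutCapOn N F S := by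
  by_contra! h
  obtain ⟨S, hS, hle⟩ := exists_isCut_cutCap_le fun F => by
    obtain ⟨S, hS, hle⟩ := h (F.filter (· ∈ N.E)) fun e he => (Finset.mem_filter.1 he).2
    refine ⟨S, hS, le_of_eq_of_le ?_ hle⟩
    rw [cutCapOn, cutCapOn, Finset.filter_filter]
    exact Finset.sum_congr
      (Finset.filter_congr fun e _ => ⟨fun he => ⟨he.1, he⟩, And.right⟩) fun _ _ => rfl
  exact (hρ.trans_le ((iInf₂_le S hS).trans hle)).false

theorem exists_isMundane_cutCapOn_le {F : Finset (V × V)} (hF : ↑F ⊆ N.E) {ε : ℝ≥0}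
    (hε : 0 < ε) :
    ∃ f, (IsFlow N f ∧ IsMundane N f) ∧
      ∃ S, IsCut N S ∧ cutCapOn N F S ≤ flowValue N f + ε := by
  obtain ⟨n, hn⟩ := exists_nat_gt (F.card / ε)
  have hn₀ : (0 : ℝ≥0) < n := zero_le.trans_lt hn
  obtain ⟨L, S, hs, ht, hL, hload, hcut⟩ :=
    IntFlow.exists_paths_and_cut F (fun e => ⌊(n : ℝ≥0) * N.c e⌋₊) N.ne
  have hL' : ∀ p ∈ L, IsSTPath N p := fun p hp => isSTPath_iff.2 ((hL p hp).mono hF)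
  have hcap : ∀ e, pathFlow L (n : ℝ≥0)⁻¹ e ≤ N.c e := fun e => by
    rw [pathFlow, ← div_eq_mul_inv, div_le_iff₀ hn₀, mul_comm]
    exact le_trans (by exact_mod_cast hload e) (Nat.floor_le zero_le)
  refine ⟨_, ⟨isFlow_pathFlow hL' hcap, isMundane_pathFlow hL' (inv_pos.2 hn₀)⟩, S,
    ⟨hs, ht⟩, ?_⟩
  have hcutF : F.filter (· ∈ cutEdges N S) = F.filter (fun e => e.1 ∈ S ∧ e.2 ∉ S) :=
    Finset.filter_congr fun e he => ⟨And.right, fun h => ⟨hF he, h⟩⟩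
  have key : ∑ e ∈ F with e ∈ cutEdges N S, N.c e ≤ L.length / n + ε :=
    calc ∑ e ∈ F with e ∈ cutEdges N S, N.c e
        ≤ ((∑ e ∈ F with e ∈ cutEdges N S, ⌊(n : ℝ≥0) * N.c e⌋₊ : ℕ) +
            (F.filter (· ∈ cutEdges N S)).card) / n := sum_le_sum_floor_add_card_div _ _ hn₀
      _ ≤ (L.length + F.card) / n := by
          rw [hcutF]
          gcongr
          exact Finset.filter_subset _ _
      _ ≤ L.length / n + ε := by
          rw [add_div]
          gcongr
          exact (div_le_iff₀ hn₀).2 ((div_lt_iff₀' hε).1 hn).le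
  rw [cutCapOn, flowValue_pathFlow hL', ← ENNReal.ofNNReal_finsetSum, ← ENNReal.coe_natCast,
    ← ENNReal.coe_mul, ← div_eq_mul_inv]
  exact_mod_cast key

end Network

theorem stmt15_general (N : Network V) :
    (⨆ (f : V × V → ℝ≥0) (_ : IsFlow N f ∧ IsMundane N f), flowValue N f) =
      ⨅ (S : Set V) (_ : IsCut N S), cutCap N S := by
  refine le_antisymm (iSup₂_le fun f hf => le_iInf₂ fun S hS =>
    N.flowValue_le_cutCap_of_isMundane hf.1 hf.2 hS) ?_
  refine ENNReal.le_of_forall_nnreal_lt fun ρ hρ => ?_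
  obtain ⟨F, hF, hcut⟩ := N.exists_finset_lt_cutCapOn hρ
  refine ENNReal.le_of_forall_pos_le_add fun ε hε _ => ?_
  obtain ⟨f, hf, S, hS, hle⟩ := N.exists_isMundane_cutCapOn_le hF hε
  calc (ρ : ℝ≥0∞) ≤ N.cutCapOn F S := (hcut S hS).le
    _ ≤ flowValue N f + ε := hle
    _ ≤ _ := by gcongr; exact le_iSup₂_of_le f hf le_rfl

theorem stmt15 [Countable V] (N : Network V) :
    (⨆ (f : V × V → ℝ≥0) (_ : IsFlow N f ∧ IsMundane N f), flowValue N f) =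
      ⨅ (S : Set V) (_ : IsCut N S), cutCap N S :=
  stmt15_general N
end
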